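/- arXiv:1603.07059 — 2 statements merged into one kernel-verified Lean document; each statement's English description precedes it below -/
import Mathlib

section
/- Let A ∈ M_m(ℂ) be self-adjoint and let t ∈ [0,1]. Then ∫_0^t λ_A(s) ds = sup{ tr(AC) : C ∈ M_m(ℂ), 0 ≤ C ≤ I, tr(C) = t }. In particular, ∫_0^1 λ_A(s) ds = tr(A). Furthermore, if A is positive, then ∫_0^t λ_A(s) ds = sup{ tr(AC) : C ∈ M_m(ℂ), 0 ≤ C ≤ I, tr(C) ≤ t }. -/
open scoped Matrix Matrix.Norms.L2Operator ComplexOrder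

/-- Eigenvalues of a Hermitian matrix listed in non-increasing order. -/
noncomputable def sortedEigs {m : ℕ} {A : Matrix (Fin m) (Fin m) ℂ}
    (hA : A.IsHermitian) : Fin m → ℝ :=
  fun i => hA.eigenvalues (Tuple.sort hA.eigenvalues i.rev)

/-- The eigenvalue function `λ_A(s) = α_{⌊ms⌋+1}`. -/
noncomputable def eigFun {m : ℕ} {A : Matrix (Fin m) (Fin m) ℂ}
    (hA : A.IsHermitian) (s : ℝ) : ℝ :=
  if h : (⌊(m : ℝ) * s⌋).toNat < m then sortedEigs hA ⟨(⌊(m : ℝ) * s⌋).toNat, h⟩ else 0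

/-- The normalized trace of a self-adjoint matrix. -/
noncomputable def ntr {m : ℕ} (A : Matrix (Fin m) (Fin m) ℂ) : ℝ :=
  (Matrix.trace A).re / m

/-!
On `[0, 1]` the eigenvalue function is the step function `s ↦ α ⌊m s⌋₊` of the decreasingly
sorted eigenvalues `α`, so `∫₀ᵗ λ_A = (1/m) ∑ᵢ wᵢ αᵢ` with the bathtub weights
`wᵢ = min (m t) (i + 1) - min (m t) i`: the first `⌊m t⌋₊` of them are `1`, the next one is the
fractional part of `m t`, the others vanish.

Conjugating `C` by the unitary diagonalising `A` turns `tr (A C)` into `(1/m) ∑ᵢ cᵢ αᵢ` (after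
sorting), where the diagonal entries `cᵢ` of the conjugate lie in `[0, 1]` and sum to
`m · tr C`. Among such `c`, filling the largest eigenvalues first is optimal: with `k` the index
of the fractional weight, every term `(cᵢ - wᵢ) (αᵢ - α_k)` is `≤ 0`. The weights themselves
are realised by `C = U diag (w ∘ σ⁻¹) U*`, `σ` the sorting permutation. For positive `A` the
right-hand side is monotone in `t`, since the weights are, so relaxing `tr C = t` to
`tr C ≤ t` does not change the supremum.
-/

open MeasureTheory Set Finset

noncomputable def bathtubWeight (x : ℝ) (i : ℕ) : ℝ := min x (i + 1) - min x i

section bathtubWeight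

variable {x : ℝ} {i : ℕ}

lemma bathtubWeight_nonneg (x : ℝ) (i : ℕ) : 0 ≤ bathtubWeight x i :=
  sub_nonneg.2 (min_le_min_left x (by linarith))

lemma bathtubWeight_le_one (x : ℝ) (i : ℕ) : bathtubWeight x i ≤ 1 := by
  simp only [bathtubWeight, min_def]
  split_ifs <;> linarith

lemma bathtubWeight_eq_one (h : (i : ℝ) + 1 ≤ x) : bathtubWeight x i = 1 := by
  rw [bathtubWeight, min_eq_right h, min_eq_right (by linarith)]
  ring

lemma bathtubWeight_eq_zero (h : x ≤ i) : bathtubWeight x i = 0 := by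
  rw [bathtubWeight, min_eq_left h, min_eq_left (by linarith), sub_self]

lemma bathtubWeight_mono (i : ℕ) : Monotone fun x => bathtubWeight x i := by
  intro x y hxy
  simp only [bathtubWeight, min_def]
  split_ifs <;> linarith

lemma sum_range_bathtubWeight (hx : 0 ≤ x) (n : ℕ) :
    ∑ i ∈ range n, bathtubWeight x i = min x n := by
  have := Finset.sum_range_sub (fun i : ℕ => min x (i : ℝ)) n
  simp only [Nat.cast_succ, Nat.cast_zero, min_eq_right hx, sub_zero] at this
  exact this

end bathtubWeight

lemma natFloor_eq_of_mem_Ioo_min {x u : ℝ} {i : ℕ}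
    (hu : u ∈ Ioo (min x i) (min x (i + 1))) : ⌊u⌋₊ = i := by
  obtain ⟨hux, hui⟩ := lt_min_iff.1 hu.2
  have hiu : (i : ℝ) < u := (min_lt_iff.1 hu.1).resolve_left hux.not_gt
  exact Nat.floor_eq_iff (i.cast_nonneg.trans hiu.le) |>.2 ⟨hiu.le, hui⟩

theorem integral_comp_natFloor (β : ℕ → ℝ) {x : ℝ} (hx : 0 ≤ x) {n : ℕ} (hxn : x ≤ n) :
    ∫ u in (0 : ℝ)..x, β ⌊u⌋₊ = ∑ i ∈ range n, bathtubWeight x i * β i := by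
  have hconst (i : ℕ) :
      EqOn (fun u => β ⌊u⌋₊) (fun _ => β i) (uIoo (min x i) (min x (i + 1))) := by
    intro u hu
    rw [uIoo_of_le (min_le_min_left x (by linarith))] at hu
    simp only [natFloor_eq_of_mem_Ioo_min hu]
  have hsplit := intervalIntegral.sum_integral_adjacent_intervals
    (a := fun i : ℕ => min x i) (n := n)
    fun i _ => by
      simpa only [Nat.cast_succ] using
        (intervalIntegrable_congr_uIoo (hconst i)).2 (intervalIntegrable_const (μ := volume))
  simp only [Nat.cast_zero, min_eq_right hx, min_eq_left hxn] at hsplit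
  rw [← hsplit]
  refine Finset.sum_congr rfl fun i _ => ?_
  rw [Nat.cast_succ, intervalIntegral.integral_congr_uIoo (hconst i),
    intervalIntegral.integral_const, smul_eq_mul, bathtubWeight]

theorem integral_eigFun {m : ℕ} (hm : 0 < m) {A : Matrix (Fin m) (Fin m) ℂ}
    (hA : A.IsHermitian) {t : ℝ} (ht : t ∈ Icc (0 : ℝ) 1) :
    ∫ s in (0 : ℝ)..t, eigFun hA s
      = (∑ i : Fin m, bathtubWeight (m * t) i * sortedEigs hA i) / m := by
  have hm' : (0 : ℝ) < m := Nat.cast_pos.2 hm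
  set β : ℕ → ℝ := fun n => if h : n < m then sortedEigs hA ⟨n, h⟩ else 0
  -- `⌊y⌋.toNat` and `⌊y⌋₊` agree definitionally on `ℝ`
  have hβ (s : ℝ) : eigFun hA s = β ⌊(m : ℝ) * s⌋₊ := rfl
  simp_rw [hβ]
  rw [intervalIntegral.integral_comp_mul_left (fun u => β ⌊u⌋₊) hm'.ne', mul_zero,
    integral_comp_natFloor _ (by nlinarith [ht.1]) (n := m) (by nlinarith [ht.2]),
    ← Fin.sum_univ_eq_sum_range (fun i => bathtubWeight (m * t) i * β i), smul_eq_mul,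
    inv_mul_eq_div]
  simp only [β, Fin.is_lt, dite_true]

theorem Antitone.sum_mul_le_sum_mul_of_threshold {ι : Type*} [Fintype ι] [LinearOrder ι]
    {α c w : ι → ℝ} (hα : Antitone α) (hc0 : ∀ i, 0 ≤ c i) (hc1 : ∀ i, c i ≤ 1) (k : ι)
    (hw_lt : ∀ i < k, w i = 1) (hw_gt : ∀ i, k < i → w i = 0)
    (hsum : ∑ i, c i = ∑ i, w i) :
    ∑ i, c i * α i ≤ ∑ i, w i * α i := by
  have hpivot (i : ι) : (c i - w i) * (α i - α k) ≤ 0 := by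
    rcases lt_trichotomy i k with h | rfl | h
    · rw [hw_lt i h]
      exact mul_nonpos_of_nonpos_of_nonneg (by linarith [hc1 i]) (sub_nonneg.2 (hα h.le))
    · simp
    · rw [hw_gt i h]
      exact mul_nonpos_of_nonneg_of_nonpos (by linarith [hc0 i]) (sub_nonpos.2 (hα h.le))
  have hexpand : ∑ i, (c i - w i) * (α i - α k)
      = ∑ i, c i * α i - ∑ i, w i * α i - (∑ i, c i - ∑ i, w i) * α k := by
    simp only [sub_mul, mul_sub, Finset.sum_sub_distrib, Finset.sum_mul]
  rw [hsum, sub_self, zero_mul, sub_zero] at hexpand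
  linarith [Finset.sum_nonpos fun i (_ : i ∈ Finset.univ) => hpivot i]

theorem sum_mul_le_sum_bathtubWeight {m : ℕ} {α : Fin m → ℝ} (hα : Antitone α)
    {c : Fin m → ℝ} (hc0 : ∀ i, 0 ≤ c i) (hc1 : ∀ i, c i ≤ 1) :
    ∑ i, c i * α i ≤ ∑ i : Fin m, bathtubWeight (∑ j, c j) i * α i := by
  rcases Nat.eq_zero_or_pos m with rfl | hm
  · simp
  set x := ∑ j, c j
  have hx0 : 0 ≤ x := Finset.sum_nonneg fun i _ => hc0 i
  have hxm : x ≤ m := (Finset.sum_le_sum fun i _ => hc1 i).trans (by simp)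
  refine hα.sum_mul_le_sum_mul_of_threshold hc0 hc1 ⟨min ⌊x⌋₊ (m - 1), by omega⟩
    (fun i hi => bathtubWeight_eq_one ?_) (fun i hi => bathtubWeight_eq_zero ?_) ?_
  · have : (i : ℕ) + 1 ≤ ⌊x⌋₊ := by
      have : (i : ℕ) < min ⌊x⌋₊ (m - 1) := hi
      omega
    exact_mod_cast (Nat.le_floor_iff hx0).1 this
  · have : ⌊x⌋₊ < i := by
      have : min ⌊x⌋₊ (m - 1) < (i : ℕ) := hi
      omega
    exact ((Nat.floor_lt hx0).1 this).le
  · rw [Fin.sum_univ_eq_sum_range (fun i => bathtubWeight x i), sum_range_bathtubWeight hx0,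
      min_eq_left hxm]

namespace Matrix

section UnitaryConj

variable {n : Type*} [DecidableEq n] {U C : Matrix n n ℂ}

lemma PosSemidef.re_diag_mem_Icc (hC : C.PosSemidef) (h1C : (1 - C).PosSemidef) (i : n) :
    (C i i).re ∈ Icc (0 : ℝ) 1 := by
  have h1 := (Complex.le_def.1 (h1C.diag_nonneg (i := i))).1
  rw [sub_apply, one_apply_eq, Complex.sub_re, Complex.one_re, Complex.zero_re] at h1
  exact ⟨(Complex.le_def.1 (hC.diag_nonneg (i := i))).1, by linarith⟩

variable [Fintype n]

lemma trace_star_mul_mul_of_mem_unitary (hU : U ∈ unitary (Matrix n n ℂ)) :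
    trace (star U * C * U) = trace C := by
  rw [trace_mul_cycle, Unitary.mul_star_self_of_mem hU, one_mul]

lemma PosSemidef.star_mul_mul_of_mem_unitary (hU : U ∈ unitary (Matrix n n ℂ))
    (hC : C.PosSemidef) (h1C : (1 - C).PosSemidef) :
    (star U * C * U).PosSemidef ∧ (1 - star U * C * U).PosSemidef := by
  refine ⟨hC.conjTranspose_mul_mul_same U, ?_⟩
  have := h1C.conjTranspose_mul_mul_same U
  rwa [← star_eq_conjTranspose, Matrix.mul_sub, Matrix.sub_mul, Matrix.mul_one,
    Unitary.star_mul_self_of_mem hU] at this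

end UnitaryConj

namespace IsHermitian

variable {n : Type*} [Fintype n] [DecidableEq n] {A : Matrix n n ℂ} (hA : A.IsHermitian)

lemma trace_mul_eq_sum (C : Matrix n n ℂ) :
    trace (A * C) = ∑ i, (hA.eigenvalues i : ℂ) *
      (star (hA.eigenvectorUnitary : Matrix n n ℂ) * C * hA.eigenvectorUnitary) i i := by
  conv_lhs => rw [hA.spectral_theorem, Unitary.conjStarAlgAut_apply]
  rw [Matrix.mul_assoc, Matrix.mul_assoc, trace_mul_comm, Matrix.mul_assoc, Matrix.mul_assoc]
  simp [trace, diagonal_mul]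

end IsHermitian

end Matrix

section SortedEigs

variable {m : ℕ} {A : Matrix (Fin m) (Fin m) ℂ} (hA : A.IsHermitian)

lemma sortedEigs_antitone : Antitone (sortedEigs hA) :=
  fun _ _ hij => Tuple.monotone_sort hA.eigenvalues (Fin.rev_le_rev.2 hij)

lemma exists_perm_sortedEigs :
    ∃ σ : Equiv.Perm (Fin m), ∀ j, sortedEigs hA j = hA.eigenvalues (σ j) :=
  ⟨Fin.revPerm.trans (Tuple.sort hA.eigenvalues), fun _ => rfl⟩

end SortedEigs

namespace Matrix.IsHermitian

variable {m : ℕ} {A : Matrix (Fin m) (Fin m) ℂ} (hA : A.IsHermitian)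

theorem re_trace_mul_le {C : Matrix (Fin m) (Fin m) ℂ} (hC : C.PosSemidef)
    (h1C : (1 - C).PosSemidef) :
    (trace (A * C)).re ≤ ∑ i : Fin m, bathtubWeight (trace C).re i * sortedEigs hA i := by
  set U := (hA.eigenvectorUnitary : Matrix (Fin m) (Fin m) ℂ)
  have hU : U ∈ unitary _ := hA.eigenvectorUnitary.2
  obtain ⟨hC', h1C'⟩ := hC.star_mul_mul_of_mem_unitary hU h1C
  set c : Fin m → ℝ := fun i => (star U * C * U) i i |>.re
  obtain ⟨σ, hσ⟩ := exists_perm_sortedEigs hA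
  have hre : (trace (A * C)).re = ∑ j, c (σ j) * sortedEigs hA j := by
    rw [hA.trace_mul_eq_sum, Complex.re_sum, ← Equiv.sum_comp σ]
    exact Finset.sum_congr rfl fun j _ => by rw [hσ, Complex.re_ofReal_mul, mul_comm]
  have htr : (trace C).re = ∑ j, c (σ j) := by
    rw [← trace_star_mul_mul_of_mem_unitary hU, trace, Complex.re_sum, ← Equiv.sum_comp σ]
    rfl
  rw [hre, htr]
  exact sum_mul_le_sum_bathtubWeight (sortedEigs_antitone hA)
    (fun j => (hC'.re_diag_mem_Icc h1C' _).1) (fun j => (hC'.re_diag_mem_Icc h1C' _).2)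

theorem exists_re_trace_mul_eq {x : ℝ} (hx0 : 0 ≤ x) (hxm : x ≤ m) :
    ∃ C : Matrix (Fin m) (Fin m) ℂ, C.PosSemidef ∧ (1 - C).PosSemidef ∧ (trace C).re = x ∧
      (trace (A * C)).re = ∑ i : Fin m, bathtubWeight x i * sortedEigs hA i := by
  set U := (hA.eigenvectorUnitary : Matrix (Fin m) (Fin m) ℂ)
  have hU : U ∈ unitary _ := hA.eigenvectorUnitary.2
  obtain ⟨σ, hσ⟩ := exists_perm_sortedEigs hA
  set d : Fin m → ℝ := fun i => bathtubWeight x (σ.symm i)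
  set D : Matrix (Fin m) (Fin m) ℂ := diagonal fun i => (d i : ℂ)
  have hD : D.PosSemidef :=
    PosSemidef.diagonal fun i => Complex.zero_le_real.2 (bathtubWeight_nonneg _ _)
  have h1D : (1 - D).PosSemidef := by
    rw [← diagonal_one, diagonal_sub]
    exact PosSemidef.diagonal fun i => by
      simpa [← Complex.ofReal_one, ← Complex.ofReal_sub] using bathtubWeight_le_one _ _
  obtain ⟨hC, h1C⟩ := hD.star_mul_mul_of_mem_unitary (Unitary.star_mem hU) h1D
  rw [star_star] at hC h1C
  have hconj : star U * (U * D * star U) * U = D := by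
    simp only [← Matrix.mul_assoc, Unitary.star_mul_self_of_mem hU, Matrix.one_mul]
    rw [Matrix.mul_assoc, Unitary.star_mul_self_of_mem hU, Matrix.mul_one]
  refine ⟨U * D * star U, hC, h1C, ?_, ?_⟩
  · rw [← trace_star_mul_mul_of_mem_unitary hU, hconj, trace_diagonal, ← Complex.ofReal_sum,
      Complex.ofReal_re, Equiv.sum_comp σ.symm (fun i => bathtubWeight x i),
      Fin.sum_univ_eq_sum_range (fun i => bathtubWeight x i), sum_range_bathtubWeight hx0,
      min_eq_left hxm]
  · rw [hA.trace_mul_eq_sum, hconj, Complex.re_sum, ← Equiv.sum_comp σ]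
    exact Finset.sum_congr rfl fun j _ => by simp [D, d, hσ, mul_comm]

end Matrix.IsHermitian

lemma ntr_mem_Icc {m : ℕ} {C : Matrix (Fin m) (Fin m) ℂ} (hC : C.PosSemidef)
    (h1C : (1 - C).PosSemidef) : ntr C ∈ Icc (0 : ℝ) 1 := by
  have htr : (Matrix.trace C).re = ∑ i, (C i i).re := by rw [Matrix.trace, Complex.re_sum]; rfl
  have h0 : 0 ≤ (Matrix.trace C).re :=
    htr ▸ Finset.sum_nonneg fun i _ => (hC.re_diag_mem_Icc h1C i).1
  have hle : (Matrix.trace C).re ≤ m :=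
    htr ▸ (Finset.sum_le_sum fun i _ => (hC.re_diag_mem_Icc h1C i).2).trans (by simp)
  exact ⟨div_nonneg h0 m.cast_nonneg, div_le_one_of_le₀ hle m.cast_nonneg⟩

section IntegralEigFun

variable {m : ℕ} (hm : 0 < m) {A : Matrix (Fin m) (Fin m) ℂ} (hA : A.IsHermitian)
include hm hA

theorem ntr_mul_le_integral_eigFun {C : Matrix (Fin m) (Fin m) ℂ} (hC : C.PosSemidef)
    (h1C : (1 - C).PosSemidef) : ntr (A * C) ≤ ∫ s in (0 : ℝ)..ntr C, eigFun hA s := by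
  rw [integral_eigFun hm hA (ntr_mem_Icc hC h1C), ntr, ntr,
    mul_div_cancel₀ _ (Nat.cast_pos.2 hm).ne']
  exact div_le_div_of_nonneg_right (hA.re_trace_mul_le hC h1C) m.cast_nonneg

theorem exists_ntr_mul_eq_integral_eigFun {t : ℝ} (ht : t ∈ Icc (0 : ℝ) 1) :
    ∃ C : Matrix (Fin m) (Fin m) ℂ, C.PosSemidef ∧ (1 - C).PosSemidef ∧ ntr C = t ∧
      ntr (A * C) = ∫ s in (0 : ℝ)..t, eigFun hA s := by
  have hm' : (0 : ℝ) < m := Nat.cast_pos.2 hm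
  obtain ⟨C, hC, h1C, htr, hAC⟩ :=
    hA.exists_re_trace_mul_eq (x := m * t) (by nlinarith [ht.1]) (by nlinarith [ht.2])
  refine ⟨C, hC, h1C, ?_, ?_⟩
  · rw [ntr, htr, mul_div_cancel_left₀ _ hm'.ne']
  · rw [ntr, hAC, integral_eigFun hm hA ht]

theorem integral_eigFun_monotoneOn (hApos : A.PosSemidef) :
    MonotoneOn (fun t => ∫ s in (0 : ℝ)..t, eigFun hA s) (Icc 0 1) := by
  intro s hs t ht hst
  simp only [integral_eigFun hm hA hs, integral_eigFun hm hA ht]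
  refine div_le_div_of_nonneg_right (Finset.sum_le_sum fun i _ => ?_) m.cast_nonneg
  exact mul_le_mul_of_nonneg_right (bathtubWeight_mono i (by gcongr))
    (hApos.eigenvalues_nonneg _)

theorem integral_eigFun_one : ∫ s in (0 : ℝ)..1, eigFun hA s = ntr A := by
  obtain ⟨σ, hσ⟩ := exists_perm_sortedEigs hA
  have hw (i : Fin m) : bathtubWeight (m * 1) i = 1 :=
    bathtubWeight_eq_one (by rw [mul_one]; exact_mod_cast i.is_lt)
  rw [integral_eigFun hm hA ⟨zero_le_one, le_rfl⟩, ntr, hA.trace_eq_sum_eigenvalues]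
  simp only [hw, one_mul, hσ, Equiv.sum_comp σ hA.eigenvalues]
  simp

theorem isGreatest_ntr_mul {t : ℝ} (ht : t ∈ Icc (0 : ℝ) 1) :
    IsGreatest {x : ℝ | ∃ C : Matrix (Fin m) (Fin m) ℂ,
        C.PosSemidef ∧ ((1 : Matrix (Fin m) (Fin m) ℂ) - C).PosSemidef ∧
        ntr C = t ∧ x = ntr (A * C)}
      (∫ s in (0 : ℝ)..t, eigFun hA s) := by
  refine ⟨?_, ?_⟩
  · obtain ⟨C, hC, h1C, htr, hAC⟩ := exists_ntr_mul_eq_integral_eigFun hm hA ht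
    exact ⟨C, hC, h1C, htr, hAC.symm⟩
  · rintro _ ⟨C, hC, h1C, rfl, rfl⟩
    exact ntr_mul_le_integral_eigFun hm hA hC h1C

theorem isGreatest_ntr_mul_of_posSemidef (hApos : A.PosSemidef) {t : ℝ}
    (ht : t ∈ Icc (0 : ℝ) 1) :
    IsGreatest {x : ℝ | ∃ C : Matrix (Fin m) (Fin m) ℂ,
        C.PosSemidef ∧ ((1 : Matrix (Fin m) (Fin m) ℂ) - C).PosSemidef ∧
        ntr C ≤ t ∧ x = ntr (A * C)}
      (∫ s in (0 : ℝ)..t, eigFun hA s) := by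
  refine ⟨?_, ?_⟩
  · obtain ⟨C, hC, h1C, htr, hAC⟩ := exists_ntr_mul_eq_integral_eigFun hm hA ht
    exact ⟨C, hC, h1C, htr.le, hAC.symm⟩
  · rintro _ ⟨C, hC, h1C, htr, rfl⟩
    exact (ntr_mul_le_integral_eigFun hm hA hC h1C).trans
      (integral_eigFun_monotoneOn hm hA hApos (ntr_mem_Icc hC h1C) ht htr)

end IntegralEigFun

theorem stmt11 (m : ℕ) (hm : 1 ≤ m) (A : Matrix (Fin m) (Fin m) ℂ)
    (hA : A.IsHermitian) (t : ℝ) (ht : t ∈ Set.Icc (0 : ℝ) 1) :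
    (∫ s in (0 : ℝ)..t, eigFun hA s) =
      sSup {x : ℝ | ∃ C : Matrix (Fin m) (Fin m) ℂ,
        C.PosSemidef ∧ ((1 : Matrix (Fin m) (Fin m) ℂ) - C).PosSemidef ∧
        ntr C = t ∧ x = ntr (A * C)} ∧
    (∫ s in (0 : ℝ)..1, eigFun hA s) = ntr A ∧
    (A.PosSemidef →
      (∫ s in (0 : ℝ)..t, eigFun hA s) =
        sSup {x : ℝ | ∃ C : Matrix (Fin m) (Fin m) ℂ,
          C.PosSemidef ∧ ((1 : Matrix (Fin m) (Fin m) ℂ) - C).PosSemidef ∧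
          ntr C ≤ t ∧ x = ntr (A * C)}) :=
  ⟨(isGreatest_ntr_mul hm hA ht).csSup_eq.symm, integral_eigFun_one hm hA,
    fun hApos => (isGreatest_ntr_mul_of_posSemidef hm hA hApos ht).csSup_eq.symm⟩
end

section
/- Let n ≥ 2 and let A, B ∈ M_m(ℂ) be positive contractions with A ≺_tr B. Then there exist positive contractions A_0, B_0 ∈ M_m(ℂ) such that: (i) A_0 ≺_tr B_0; (ii) ‖A_0 − A‖ < 2/(n−1) + 2/n and ‖B_0 − B‖ < 2/(n−1) + 3/n; and (iii) every eigenvalue of A_0 and every eigenvalue of B_0 lies in {k/n : k ∈ {0, 1, …, n}}. -/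
/-!
Keep the eigenvectors of `A` and replace its non-increasing eigenvalue list `x` by `q / n`,
where `q k = ⌊n S (k+1)⌋ - ⌊n S k⌋` for the partial sums `S` of `x`. Then `q k ∈ {0, …, n}`
and `|q k / n - x k| < 1 / n`, so the perturbation has norm at most `1 / n`.

Majorization survives although `q` need not be sorted: the sum of the `l` largest entries
of a vector `u` is `min_t (l t + ∑ k, (u k - t)⁺)`, and for an integer `t` the sum
`∑ k, (q k - t)⁺` is the positive variation of `j ↦ ⌊n S j - t j⌋`. As `n S j - t j` is
concave in `j`, that variation equals `max_j ⌊n S j - t j⌋`, which is monotone in the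
partial sums, hence smaller for `A` than for `B`.
-/

open scoped Matrix Matrix.Norms.L2Operator ComplexOrder

/-- `Maj hA hB` means `A ≺_tr B`. -/
def Maj {m : ℕ} {A B : Matrix (Fin m) (Fin m) ℂ}
    (hA : A.IsHermitian) (hB : B.IsHermitian) : Prop :=
  (∀ l : Fin m, ∑ k ∈ Finset.Iic l, sortedEigs hA k ≤ ∑ k ∈ Finset.Iic l, sortedEigs hB k) ∧
  (∑ k, sortedEigs hA k = ∑ k, sortedEigs hB k)

open Finset

section Sorting

variable {α β : Type*} {m : ℕ}

def antitoneSort [LinearOrder α] (f : Fin m → α) : Fin m → α :=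
  fun i => f (Tuple.sort f i.rev)

lemma map_univ_comp_perm (f : Fin m → α) (σ : Equiv.Perm (Fin m)) :
    univ.val.map (f ∘ σ) = univ.val.map f := by
  rw [← Multiset.map_map, Multiset.map_univ_val_equiv]

lemma forall_of_map_univ_eq {f g : Fin m → α} (h : univ.val.map f = univ.val.map g)
    (p : α → Prop) (hg : ∀ k, p (g k)) (i : Fin m) : p (f i) :=
  (Multiset.forall_mem_map_iff.1 (h ▸ Multiset.forall_mem_map_iff.2 fun k _ => hg k)) i
    (mem_univ_val i)

variable [LinearOrder α]

lemma antitone_antitoneSort (f : Fin m → α) : Antitone (antitoneSort f) :=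
  fun _ _ hij => Tuple.monotone_sort f (Fin.rev_le_rev.mpr hij)

lemma exists_perm_antitoneSort_eq (f : Fin m → α) :
    ∃ σ : Equiv.Perm (Fin m), antitoneSort f = f ∘ σ :=
  ⟨Fin.revPerm.trans (Tuple.sort f), rfl⟩

lemma map_univ_antitoneSort (f : Fin m → α) :
    univ.val.map (antitoneSort f) = univ.val.map f := by
  obtain ⟨σ, hσ⟩ := exists_perm_antitoneSort_eq f
  rw [hσ, map_univ_comp_perm]

lemma sum_comp_antitoneSort [AddCommMonoid β] (f : Fin m → α) (g : α → β) :
    ∑ k, g (antitoneSort f k) = ∑ k, g (f k) := by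
  obtain ⟨σ, hσ⟩ := exists_perm_antitoneSort_eq f
  rw [hσ]
  exact Equiv.sum_comp σ (g ∘ f)

lemma eq_of_antitone_of_map_univ_eq {f g : Fin m → α} (hf : Antitone f) (hg : Antitone g)
    (h : univ.val.map f = univ.val.map g) : f = g := by
  rw [Fin.univ_val_map, Fin.univ_val_map, Multiset.coe_eq_coe] at h
  exact List.ofFn_injective (h.eq_of_sortedGE hf.sortedGE_ofFn hg.sortedGE_ofFn)

lemma antitoneSort_eq_of_map_univ_eq {f g : Fin m → α}
    (h : univ.val.map f = univ.val.map g) : antitoneSort f = antitoneSort g :=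
  eq_of_antitone_of_map_univ_eq (antitone_antitoneSort f) (antitone_antitoneSort g) <| by
    rw [map_univ_antitoneSort, map_univ_antitoneSort, h]

lemma antitoneSort_comp_of_monotone [LinearOrder β] (f : Fin m → α) {φ : α → β}
    (hφ : Monotone φ) : antitoneSort (φ ∘ f) = φ ∘ antitoneSort f :=
  eq_of_antitone_of_map_univ_eq (antitone_antitoneSort _)
    (hφ.comp_antitone (antitone_antitoneSort f)) <| by
    rw [map_univ_antitoneSort, ← Multiset.map_map, ← Multiset.map_map, map_univ_antitoneSort]

end Sorting

section Majorization

variable {α β : Type*} {m : ℕ}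

def IsMajorizedBy [AddCommMonoid α] [LinearOrder α] (x y : Fin m → α) : Prop :=
  (∀ l, ∑ k ∈ Iic l, antitoneSort x k ≤ ∑ k ∈ Iic l, antitoneSort y k) ∧
    ∑ k, antitoneSort x k = ∑ k, antitoneSort y k

lemma IsMajorizedBy.of_map_univ_eq [AddCommMonoid α] [LinearOrder α] {x y x' y' : Fin m → α}
    (h : IsMajorizedBy x y) (hx : univ.val.map x = univ.val.map x')
    (hy : univ.val.map y = univ.val.map y') : IsMajorizedBy x' y' := by
  rwa [IsMajorizedBy, ← antitoneSort_eq_of_map_univ_eq hx, ← antitoneSort_eq_of_map_univ_eq hy]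

lemma IsMajorizedBy.map [AddCommMonoid α] [LinearOrder α] [AddCommMonoid β] [LinearOrder β]
    {x y : Fin m → α} (h : IsMajorizedBy x y) (φ : α →+ β) (hφ : Monotone φ) :
    IsMajorizedBy (φ ∘ x) (φ ∘ y) := by
  simp only [IsMajorizedBy, antitoneSort_comp_of_monotone _ hφ, Function.comp_apply, ← map_sum]
  exact ⟨fun l => hφ (h.1 l), congrArg φ h.2⟩

lemma IsMajorizedBy.intCast_div {x y : Fin m → ℤ} (h : IsMajorizedBy x y) (n : ℕ) :
    IsMajorizedBy (fun k => (x k : ℝ) / n) (fun k => (y k : ℝ) / n) := by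
  simpa [Function.comp_def, div_eq_mul_inv] using
    h.map ((AddMonoidHom.mulRight ((n : ℝ)⁻¹)).comp (Int.castAddHom ℝ)) fun a b hab => by
      simpa using mul_le_mul_of_nonneg_right (Int.cast_le.2 hab) (inv_nonneg.2 n.cast_nonneg)

variable [AddCommGroup α] [LinearOrder α] [IsOrderedAddMonoid α]

lemma sum_Iic_le_nsmul_add_sum_posPart (u : Fin m → α) (t : α) (l : Fin m) :
    ∑ k ∈ Iic l, u k ≤ #(Iic l) • t + ∑ k, (u k - t)⁺ :=
  calc ∑ k ∈ Iic l, u k ≤ ∑ k ∈ Iic l, (t + (u k - t)⁺) :=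
        sum_le_sum fun k _ => sub_le_iff_le_add'.1 (le_posPart (u k - t))
    _ = #(Iic l) • t + ∑ k ∈ Iic l, (u k - t)⁺ := by rw [sum_add_distrib, sum_const]
    _ ≤ #(Iic l) • t + ∑ k, (u k - t)⁺ := add_le_add le_rfl <|
        sum_le_sum_of_subset_of_nonneg (subset_univ _) fun k _ _ => posPart_nonneg (u k - t)

lemma sum_Iic_eq_nsmul_add_sum_posPart {u : Fin m → α} (hu : Antitone u) (l : Fin m) :
    ∑ k ∈ Iic l, u k = #(Iic l) • u l + ∑ k, (u k - u l)⁺ := by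
  have htail : ∑ k, (u k - u l)⁺ = ∑ k ∈ Iic l, (u k - u l) := by
    rw [← sum_subset (subset_univ (Iic l)) fun k _ hk => posPart_eq_zero.2 <| sub_nonpos.2 <|
      hu (not_le.1 (by simpa using hk)).le]
    exact sum_congr rfl fun k hk => posPart_eq_self.2 <| sub_nonneg.2 <| hu (mem_Iic.1 hk)
  rw [htail, sum_sub_distrib, sum_const, add_sub_cancel]

lemma isMajorizedBy_of_sum_posPart_le {x y : Fin m → α}
    (h : ∀ t, ∑ k, (x k - t)⁺ ≤ ∑ k, (y k - t)⁺) (hsum : ∑ k, x k = ∑ k, y k) :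
    IsMajorizedBy x y := by
  refine ⟨fun l => ?_,
    (sum_comp_antitoneSort x id).trans (hsum.trans (sum_comp_antitoneSort y id).symm)⟩
  set t := antitoneSort y l
  calc ∑ k ∈ Iic l, antitoneSort x k ≤ #(Iic l) • t + ∑ k, (antitoneSort x k - t)⁺ :=
        sum_Iic_le_nsmul_add_sum_posPart _ t l
    _ = #(Iic l) • t + ∑ k, (x k - t)⁺ := by
        rw [sum_comp_antitoneSort x (fun a => (a - t)⁺)]
    _ ≤ #(Iic l) • t + ∑ k, (y k - t)⁺ := add_le_add le_rfl (h t)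
    _ = #(Iic l) • t + ∑ k, (antitoneSort y k - t)⁺ := by
        rw [sum_comp_antitoneSort y (fun a => (a - t)⁺)]
    _ = ∑ k ∈ Iic l, antitoneSort y k :=
        (sum_Iic_eq_nsmul_add_sum_posPart (antitone_antitoneSort y) l).symm

end Majorization

section PositiveVariation

lemma sub_le_sum_range_posPart_sub {α : Type*} [AddCommGroup α] [LinearOrder α]
    [IsOrderedAddMonoid α] (a : ℕ → α) {j M : ℕ} (hj : j ≤ M) :
    a j - a 0 ≤ ∑ k ∈ range M, (a (k + 1) - a k)⁺ := by
  rw [← sum_range_sub]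
  calc ∑ k ∈ range j, (a (k + 1) - a k) ≤ ∑ k ∈ range j, (a (k + 1) - a k)⁺ :=
        sum_le_sum fun k _ => le_posPart _
    _ ≤ ∑ k ∈ range M, (a (k + 1) - a k)⁺ :=
        sum_le_sum_of_subset_of_nonneg (range_subset_range.2 hj) fun k _ _ => posPart_nonneg _

lemma exists_floor_sub_eq_sum_range_posPart (γ : ℕ → ℝ) (M : ℕ)
    (hγ : ∀ j k, j ≤ k → k < M → γ (k + 1) - γ k ≤ γ (j + 1) - γ j) :
    ∃ j ≤ M, ∑ k ∈ range M, (⌊γ (k + 1)⌋ - ⌊γ k⌋)⁺ = ⌊γ j⌋ - ⌊γ 0⌋ := by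
  induction M with
  | zero => exact ⟨0, le_rfl, by simp⟩
  | succ M ih =>
    obtain ⟨j, hjM, hj⟩ := ih fun j k hjk hk => hγ j k hjk (hk.trans M.lt_succ_self)
    rw [sum_range_succ]
    by_cases hstep : ⌊γ (M + 1)⌋ ≤ ⌊γ M⌋
    · refine ⟨j, hjM.trans M.le_succ, ?_⟩
      rw [hj, posPart_eq_zero.2 (sub_nonpos.2 hstep), add_zero]
    -- `⌊γ⌋` goes up at step `M`, so by concavity `γ` went up at every earlier step.
    have hup : γ M ≤ γ (M + 1) :=
      ((Int.floor_lt.1 (not_le.1 hstep)).trans_le (Int.floor_le _)).le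
    have hjM' : γ j ≤ γ M := Nat.decreasingInduction' (P := fun k => γ k ≤ γ M)
      (fun k hk _ hk1 => by linarith [hγ k M hk.le M.lt_succ_self]) hjM le_rfl
    have hsum : ∑ k ∈ range M, (⌊γ (k + 1)⌋ - ⌊γ k⌋)⁺ = ⌊γ M⌋ - ⌊γ 0⌋ :=
      le_antisymm (hj ▸ sub_le_sub_right (Int.floor_le_floor hjM') _)
        (sub_le_sum_range_posPart_sub (fun k => ⌊γ k⌋) le_rfl)
    refine ⟨M + 1, le_rfl, ?_⟩
    rw [hsum, posPart_eq_self.2 (sub_nonneg.2 (not_le.1 hstep).le)]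
    ring

end PositiveVariation

section Quantize

variable {m : ℕ}

def prefixSum (x : Fin m → ℝ) (l : ℕ) : ℝ :=
  ∑ i ∈ univ.filter (fun i : Fin m => (i : ℕ) < l), x i

lemma prefixSum_zero (x : Fin m → ℝ) : prefixSum x 0 = 0 := by
  simp [prefixSum]

lemma prefixSum_succ (x : Fin m → ℝ) (k : Fin m) :
    prefixSum x (k + 1) = prefixSum x k + x k := by
  rw [prefixSum, prefixSum, add_comm _ (x k), ← sum_insert (by simp)]
  refine sum_congr (Finset.ext fun i => ?_) fun _ _ => rfl
  simp only [mem_insert, mem_filter, mem_univ, true_and, Fin.ext_iff]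
  omega

lemma prefixSum_succ_eq_sum_Iic (x : Fin m → ℝ) (k : Fin m) :
    prefixSum x (k + 1) = ∑ i ∈ Iic k, x i := by
  rw [prefixSum]
  refine sum_congr (Finset.ext fun i => ?_) fun _ _ => rfl
  simp only [mem_filter, mem_univ, true_and, mem_Iic, Fin.le_iff_val_le_val]
  omega

lemma prefixSum_of_le (x : Fin m → ℝ) {l : ℕ} (hl : m ≤ l) :
    prefixSum x l = ∑ i, x i := by
  rw [prefixSum, filter_true_of_mem fun i _ => i.isLt.trans_le hl]

noncomputable def quantize (n : ℕ) (x : Fin m → ℝ) (k : Fin m) : ℤ :=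
  ⌊n * prefixSum x (k + 1)⌋ - ⌊n * prefixSum x k⌋

variable (n : ℕ)

lemma quantize_eq (x : Fin m → ℝ) (k : Fin m) :
    quantize n x k = ⌊n * prefixSum x k + n * x k⌋ - ⌊n * prefixSum x k⌋ := by
  rw [quantize, prefixSum_succ, mul_add]

lemma quantize_nonneg {x : Fin m → ℝ} {k : Fin m} (hx : 0 ≤ x k) : 0 ≤ quantize n x k := by
  rw [quantize_eq, sub_nonneg]
  exact Int.floor_le_floor (le_add_of_nonneg_right (by positivity))

lemma quantize_le {x : Fin m → ℝ} {k : Fin m} (hx : x k ≤ 1) : quantize n x k ≤ n := by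
  rw [quantize_eq, sub_le_iff_le_add', ← Int.floor_add_natCast]
  exact Int.floor_le_floor (add_le_add_right (mul_le_of_le_one_right n.cast_nonneg hx) _)

lemma abs_quantize_sub_lt (x : Fin m → ℝ) (k : Fin m) :
    |(quantize n x k : ℝ) - n * x k| < 1 := by
  rw [quantize_eq, abs_sub_lt_iff]
  push_cast
  constructor <;> linarith [Int.floor_le (n * prefixSum x k + n * x k),
    Int.floor_le (n * prefixSum x k), Int.lt_floor_add_one (n * prefixSum x k + n * x k),
    Int.lt_floor_add_one (n * prefixSum x k)]

lemma sum_quantize (x : Fin m → ℝ) : ∑ k, quantize n x k = ⌊n * ∑ k, x k⌋ := by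
  have htel := Fin.sum_univ_eq_sum_range
    (fun k => ⌊(n : ℝ) * prefixSum x (k + 1)⌋ - ⌊(n : ℝ) * prefixSum x k⌋) m
  rwa [sum_range_sub (fun l => ⌊(n : ℝ) * prefixSum x l⌋), prefixSum_zero,
    prefixSum_of_le x le_rfl, mul_zero, Int.floor_zero, sub_zero] at htel

lemma sum_posPart_quantize_sub_le {x y : Fin m → ℝ} (hx : Antitone x)
    (hxy : ∀ l ≤ m, prefixSum x l ≤ prefixSum y l) (t : ℤ) :
    ∑ k, (quantize n x k - t)⁺ ≤ ∑ k, (quantize n y k - t)⁺ := by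
  set γ : (Fin m → ℝ) → ℕ → ℝ := fun z l => n * prefixSum z l - ((t * l : ℤ) : ℝ)
  have hfloor (z : Fin m → ℝ) (l : ℕ) : ⌊γ z l⌋ = ⌊n * prefixSum z l⌋ - t * l :=
    Int.floor_sub_intCast _ _
  have hvar (z : Fin m → ℝ) :
      ∑ k, (quantize n z k - t)⁺ =
        ∑ k ∈ range m, (⌊γ z (k + 1)⌋ - ⌊γ z k⌋)⁺ := by
    refine .trans ?_ (Fin.sum_univ_eq_sum_range (fun k => (⌊γ z (k + 1)⌋ - ⌊γ z k⌋)⁺) m)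
    refine sum_congr rfl fun k _ => ?_
    rw [hfloor, hfloor, quantize]
    push_cast
    ring_nf
  have hinc (l : Fin m) : γ x (l + 1) - γ x l = n * x l - t := by
    simp only [γ, prefixSum_succ]
    push_cast
    ring
  obtain ⟨j, hjm, hj⟩ := exists_floor_sub_eq_sum_range_posPart (γ x) m fun i k hik hk => by
    have hi := hinc ⟨i, hik.trans_lt hk⟩
    have hk' := hinc ⟨k, hk⟩
    dsimp only at hi hk'
    rw [hi, hk']
    exact sub_le_sub_right (mul_le_mul_of_nonneg_left (hx hik) n.cast_nonneg) _
  rw [hvar, hvar, hj]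
  calc ⌊γ x j⌋ - ⌊γ x 0⌋ ≤ ⌊γ y j⌋ - ⌊γ y 0⌋ := by
        simp only [γ, prefixSum_zero]
        exact sub_le_sub_right (Int.floor_le_floor (sub_le_sub_right
          (mul_le_mul_of_nonneg_left (hxy j hjm) n.cast_nonneg) _)) _
    _ ≤ _ := sub_le_sum_range_posPart_sub (fun l => ⌊γ y l⌋) hjm

theorem isMajorizedBy_quantize {x y : Fin m → ℝ} (hx : Antitone x)
    (hle : ∀ l, ∑ k ∈ Iic l, x k ≤ ∑ k ∈ Iic l, y k) (hsum : ∑ k, x k = ∑ k, y k) :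
    IsMajorizedBy (quantize n x) (quantize n y) := by
  have hxy : ∀ l ≤ m, prefixSum x l ≤ prefixSum y l := by
    rintro (_ | l) hl
    · simp [prefixSum_zero]
    · simpa only [← prefixSum_succ_eq_sum_Iic] using hle ⟨l, hl⟩
  exact isMajorizedBy_of_sum_posPart_le (sum_posPart_quantize_sub_le n hx hxy)
    (by rw [sum_quantize, sum_quantize, hsum])

end Quantize

namespace Matrix

variable {ι : Type*} [Fintype ι] [DecidableEq ι]

lemma charpoly_conjStarAlgAut (U : unitaryGroup ι ℂ) (X : Matrix ι ι ℂ) :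
    (Unitary.conjStarAlgAut ℂ _ U X).charpoly = X.charpoly := by
  rw [Unitary.conjStarAlgAut_apply, charpoly_mul_comm, ← mul_assoc, Unitary.coe_star_mul_self,
    one_mul]

lemma norm_conjStarAlgAut (U : unitaryGroup ι ℂ) (X : Matrix ι ι ℂ) :
    ‖Unitary.conjStarAlgAut ℂ _ U X‖ = ‖X‖ := by
  rw [Unitary.conjStarAlgAut_apply, ← Unitary.coe_star, CStarRing.norm_mul_coe_unitary,
    CStarRing.norm_coe_unitary_mul]

lemma isHermitian_conjStarAlgAut_diagonal (U : unitaryGroup ι ℂ) (c : ι → ℝ) :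
    (Unitary.conjStarAlgAut ℂ _ U (diagonal (RCLike.ofReal ∘ c))).IsHermitian := by
  rw [isHermitian_iff_isSelfAdjoint]
  exact (isHermitian_diagonal_iff.2 fun i => RCLike.conj_ofReal (c i)).isSelfAdjoint.map _

lemma IsHermitian.map_univ_eigenvalues_eq {N : Matrix ι ι ℂ} (hN : N.IsHermitian)
    (U : unitaryGroup ι ℂ) (c : ι → ℝ)
    (h : N = Unitary.conjStarAlgAut ℂ _ U (diagonal (RCLike.ofReal ∘ c))) :
    univ.val.map hN.eigenvalues = univ.val.map c := by
  have hroots : N.charpoly.roots = univ.val.map (RCLike.ofReal ∘ c) := by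
    rw [h, charpoly_conjStarAlgAut, charpoly_diagonal,
      Polynomial.roots_prod _ _ (by simp [prod_ne_zero_iff, Polynomial.X_sub_C_ne_zero])]
    simp
  rw [hN.roots_charpoly_eq_eigenvalues, ← Multiset.map_map, ← Multiset.map_map] at hroots
  exact Multiset.map_injective RCLike.ofReal_injective hroots

lemma IsHermitian.exists_map_univ_eigenvalues_eq {M : Matrix ι ι ℂ} (hM : M.IsHermitian)
    (c : ι → ℝ) :
    ∃ (M₀ : Matrix ι ι ℂ) (h₀ : M₀.IsHermitian),
      univ.val.map h₀.eigenvalues = univ.val.map c ∧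
        ‖M₀ - M‖ = ‖c - hM.eigenvalues‖ := by
  set U := hM.eigenvectorUnitary
  have h₀ := isHermitian_conjStarAlgAut_diagonal U c
  refine ⟨_, h₀, h₀.map_univ_eigenvalues_eq U c rfl, ?_⟩
  conv_lhs => rw [hM.spectral_theorem, ← map_sub, norm_conjStarAlgAut, diagonal_sub,
    l2_opNorm_diagonal]
  simp only [Pi.norm_def, Pi.sub_apply, Function.comp_apply, ← RCLike.ofReal_sub]
  congr! 3 with i
  exact Complex.nnnorm_real _

open scoped MatrixOrder in
lemma IsHermitian.posSemidef_one_sub_iff {N : Matrix ι ι ℂ} (hN : N.IsHermitian) :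
    (1 - N).PosSemidef ↔ ∀ i, hN.eigenvalues i ≤ 1 := by
  rw [← le_iff, ← map_one (algebraMap ℝ (Matrix ι ι ℂ)),
    le_algebraMap_iff_spectrum_le hN.isSelfAdjoint, hN.spectrum_real_eq_range_eigenvalues]
  simp

end Matrix

section PositiveContractions

variable {m : ℕ}

lemma maj_iff_isMajorizedBy {A B : Matrix (Fin m) (Fin m) ℂ} (hA : A.IsHermitian)
    (hB : B.IsHermitian) : Maj hA hB ↔ IsMajorizedBy hA.eigenvalues hB.eigenvalues :=
  Iff.rfl

theorem exists_quantized_approx {M : Matrix (Fin m) (Fin m) ℂ} (hM : M.PosSemidef)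
    (hM1 : (1 - M).PosSemidef) {n : ℕ} (hn : 0 < n) :
    ∃ (M₀ : Matrix (Fin m) (Fin m) ℂ) (h₀ : M₀.PosSemidef), (1 - M₀).PosSemidef ∧
      ‖M₀ - M‖ ≤ 1 / n ∧
      (∀ i, ∃ k : ℕ, k ≤ n ∧ h₀.isHermitian.eigenvalues i = k / n) ∧
      univ.val.map h₀.isHermitian.eigenvalues =
        univ.val.map fun k =>
          (quantize n (antitoneSort hM.isHermitian.eigenvalues) k : ℝ) / n := by
  set x := antitoneSort hM.isHermitian.eigenvalues
  set q : Fin m → ℝ := fun k => (quantize n x k : ℝ) / n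
  have hn' : (0 : ℝ) < n := by exact_mod_cast hn
  have hx0 (k : Fin m) : 0 ≤ x k := hM.eigenvalues_nonneg _
  have hx1 (k : Fin m) : x k ≤ 1 := hM.isHermitian.posSemidef_one_sub_iff.1 hM1 _
  have hq (k : Fin m) : ∃ j : ℕ, j ≤ n ∧ q k = j / n := by
    obtain ⟨j, hj⟩ := Int.eq_ofNat_of_zero_le (quantize_nonneg n (hx0 k))
    exact ⟨j, by have := quantize_le n (hx1 k); omega, by simp [q, hj]⟩
  have hq01 (k : Fin m) : 0 ≤ q k ∧ q k ≤ 1 := by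
    obtain ⟨j, hjn, hj⟩ := hq k
    rw [hj]
    exact ⟨by positivity, div_le_one_of_le₀ (by exact_mod_cast hjn) hn'.le⟩
  have hqx (k : Fin m) : |q k - x k| ≤ 1 / n := by
    rw [show q k - x k = ((quantize n x k : ℝ) - n * x k) / n by simp only [q]; field_simp,
      abs_div, abs_of_pos hn']
    exact div_le_div_of_nonneg_right (abs_quantize_sub_lt n x k).le hn'.le
  obtain ⟨σ, hσ⟩ := exists_perm_antitoneSort_eq hM.isHermitian.eigenvalues
  obtain ⟨M₀, h₀, hmap, hnorm⟩ :=
    hM.isHermitian.exists_map_univ_eigenvalues_eq (q ∘ σ.symm)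
  rw [map_univ_comp_perm] at hmap
  refine ⟨M₀, h₀.posSemidef_iff_eigenvalues_nonneg.2
      (forall_of_map_univ_eq hmap (0 ≤ ·) fun k => (hq01 k).1),
    h₀.posSemidef_one_sub_iff.2 (forall_of_map_univ_eq hmap (· ≤ 1) fun k => (hq01 k).2),
    hnorm ▸ ?_, forall_of_map_univ_eq hmap (fun r => ∃ k : ℕ, k ≤ n ∧ r = k / n) hq,
    hmap⟩
  refine (pi_norm_le_iff_of_nonneg (by positivity)).2 fun i => ?_
  simpa [x, hσ] using hqx (σ.symm i)

end PositiveContractions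

theorem stmt17 (m n : ℕ) (hn : 2 ≤ n) (A B : Matrix (Fin m) (Fin m) ℂ)
    (hA : A.PosSemidef) (hA1 : ((1 : Matrix (Fin m) (Fin m) ℂ) - A).PosSemidef)
    (hB : B.PosSemidef) (hB1 : ((1 : Matrix (Fin m) (Fin m) ℂ) - B).PosSemidef)
    (hmaj : Maj hA.isHermitian hB.isHermitian) :
    ∃ (A0 B0 : Matrix (Fin m) (Fin m) ℂ)
      (hA0 : A0.PosSemidef) (_ : ((1 : Matrix (Fin m) (Fin m) ℂ) - A0).PosSemidef)
      (hB0 : B0.PosSemidef) (_ : ((1 : Matrix (Fin m) (Fin m) ℂ) - B0).PosSemidef),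
      Maj hA0.isHermitian hB0.isHermitian ∧
      ‖A0 - A‖ < 2 / ((n : ℝ) - 1) + 2 / n ∧
      ‖B0 - B‖ < 2 / ((n : ℝ) - 1) + 3 / n ∧
      (∀ i : Fin m, ∃ k : ℕ, k ≤ n ∧ hA0.isHermitian.eigenvalues i = (k : ℝ) / n) ∧
      (∀ i : Fin m, ∃ k : ℕ, k ≤ n ∧ hB0.isHermitian.eigenvalues i = (k : ℝ) / n) := by
  have hn0 : 0 < n := by omega
  obtain ⟨A0, hA0, hA01, hAnorm, hAq, hAmap⟩ := exists_quantized_approx hA hA1 hn0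
  obtain ⟨B0, hB0, hB01, hBnorm, hBq, hBmap⟩ := exists_quantized_approx hB hB1 hn0
  have hmaj0 : Maj hA0.isHermitian hB0.isHermitian := by
    obtain ⟨hle, hsum⟩ := (maj_iff_isMajorizedBy _ _).1 hmaj
    exact (maj_iff_isMajorizedBy _ _).2 <|
      ((isMajorizedBy_quantize n (antitone_antitoneSort _) hle hsum).intCast_div n).of_map_univ_eq
        hAmap.symm hBmap.symm
  have hn1 : (1 : ℝ) < n := by exact_mod_cast hn
  have hεA : (1 : ℝ) / n < 2 / ((n : ℝ) - 1) + 2 / n := by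
    have : 0 < 2 / ((n : ℝ) - 1) := div_pos two_pos (by linarith)
    have : (1 : ℝ) / n < 2 / n := div_lt_div_of_pos_right one_lt_two (by linarith)
    linarith
  have hεB : (1 : ℝ) / n < 2 / ((n : ℝ) - 1) + 3 / n := hεA.trans_le (by gcongr; norm_num)
  exact ⟨A0, B0, hA0, hA01, hB0, hB01, hmaj0, hAnorm.trans_lt hεA, hBnorm.trans_lt hεB,
    hAq, hBq⟩
end
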